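/- More generally, for any 0 ≤ α ≤ 1 and λ ∈ (0,1], Σ_{k≥1} (1 + k^{2r})^α (1 + λ k^{2r})^{-2} ≤ c λ^{-α − 1/(2r)} for a constant c depending only on r and α, provided 2 − α > 1/(2r) (which holds since α ≤ 1 ≤ 2 − 1/(2r) for r ≥ 1). -/

import Mathlib

/-!
Since `λ ≤ 1`, `1 + x ≤ λ⁻¹ (1 + λ x)`, and as `0 ≤ α ≤ 1` this gives
`(1 + x)^α ≤ λ^(-α) (1 + λ x)`, so each term is at most `λ^(-α) (1 + λ k^(2r))⁻¹`.
With `t = λ^(1/(2r))` we have `λ k^(2r) = (t k)^(2r)` and `1 + s^2 ≤ 2 (1 + s^(2r))`, so the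
remaining sum is at most twice `∑ (1 + (t k)^2)⁻¹ ≤ ∫₀^∞ (1 + (t x)^2)⁻¹ dx = π / (2t)`.
Hence `c = π` works.
-/

open Finset Real

lemma rpow_one_add_mul_inv_sq_le {α lam x : ℝ} (hα0 : 0 ≤ α) (hα1 : α ≤ 1)
    (hlam0 : 0 < lam) (hlam1 : lam ≤ 1) (hx : 0 ≤ x) :
    (1 + x) ^ α * ((1 + lam * x) ^ 2)⁻¹ ≤ lam ^ (-α) * (1 + lam * x)⁻¹ := by
  have hy : 1 ≤ 1 + lam * x := by nlinarith
  have hbase : 1 + x ≤ lam⁻¹ * (1 + lam * x) := by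
    rw [mul_add, inv_mul_cancel_left₀ hlam0.ne', mul_one]
    linarith [one_le_inv₀ hlam0 |>.2 hlam1]
  have hnum : (1 + x) ^ α ≤ lam ^ (-α) * (1 + lam * x) :=
    calc (1 + x) ^ α ≤ (lam⁻¹ * (1 + lam * x)) ^ α := by gcongr
      _ = lam ^ (-α) * (1 + lam * x) ^ α := by
        rw [mul_rpow (by positivity) (by positivity), inv_rpow hlam0.le, rpow_neg hlam0.le]
      _ ≤ lam ^ (-α) * (1 + lam * x) := by gcongr; exact rpow_le_self_of_one_le hy hα1
  calc (1 + x) ^ α * ((1 + lam * x) ^ 2)⁻¹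
      ≤ lam ^ (-α) * (1 + lam * x) * ((1 + lam * x) ^ 2)⁻¹ := by gcongr
    _ = lam ^ (-α) * (1 + lam * x)⁻¹ := by
      have : 1 + lam * x ≠ 0 := by positivity
      field_simp

lemma one_add_sq_le_two_mul_one_add_pow {q : ℕ} (hq : 2 ≤ q) {s : ℝ} (hs : 0 ≤ s) :
    1 + s ^ 2 ≤ 2 * (1 + s ^ q) := by
  rcases le_total s 1 with hs1 | hs1
  · nlinarith [pow_le_one₀ hs hs1 (n := 2), pow_nonneg hs q]
  · nlinarith [pow_le_pow_right₀ hs1 hq]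

lemma sum_range_inv_one_add_mul_sq_le {t : ℝ} (ht : 0 < t) (n : ℕ) :
    ∑ k ∈ range n, (1 + (t * (k + 1 : ℕ)) ^ 2)⁻¹ ≤ π / (2 * t) := by
  set f : ℝ → ℝ := fun x => (1 + (t * x) ^ 2)⁻¹
  have hf : AntitoneOn f (Set.Ici 0) := by
    intro x hx y hy hxy
    simp only [f, Set.mem_Ici] at *
    gcongr
  calc ∑ k ∈ range n, f (k + 1 : ℕ)
      ≤ ∫ x in (0 : ℝ)..0 + n, f x := by
        simpa using (hf.mono Set.Icc_subset_Ici_self).sum_le_integral (x₀ := 0) (a := n)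
    _ = t⁻¹ * arctan (t * n) := by
        simp [f, intervalIntegral.integral_comp_mul_left (fun x => (1 + x ^ 2)⁻¹) ht.ne',
          integral_inv_one_add_sq]
    _ ≤ t⁻¹ * (π / 2) := by gcongr; exact (arctan_lt_pi_div_two _).le
    _ = π / (2 * t) := by field_simp

lemma sum_range_inv_one_add_mul_pow_le {q : ℕ} (hq : 2 ≤ q) {lam : ℝ} (hlam : 0 < lam) (n : ℕ) :
    ∑ k ∈ range n, (1 + lam * ((k : ℝ) + 1) ^ q)⁻¹ ≤ π * lam ^ (-(1 / (q : ℝ))) := by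
  set t := lam ^ (1 / (q : ℝ))
  have ht : 0 < t := by positivity
  have hlam_eq : lam = t ^ q := by
    rw [← rpow_natCast, ← rpow_mul hlam.le, one_div_mul_cancel (by positivity), rpow_one]
  calc ∑ k ∈ range n, (1 + lam * ((k : ℝ) + 1) ^ q)⁻¹
      ≤ ∑ k ∈ range n, 2 * (1 + (t * (k + 1 : ℕ)) ^ 2)⁻¹ := by
        refine sum_le_sum fun k _ => ?_
        have hs : 0 ≤ t * (k + 1 : ℕ) := by positivity
        rw [hlam_eq, ← mul_pow, ← Nat.cast_add_one, ← div_eq_mul_inv, ← inv_div]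
        exact inv_anti₀ (by positivity) (by linarith [one_add_sq_le_two_mul_one_add_pow hq hs])
    _ ≤ 2 * (π / (2 * t)) := by
        rw [← mul_sum]
        gcongr
        exact sum_range_inv_one_add_mul_sq_le ht n
    _ = π * t⁻¹ := by field_simp
    _ = π * lam ^ (-(1 / (q : ℝ))) := by rw [rpow_neg hlam.le]

/-- Series estimate: for `r ≥ 1`, `0 ≤ α ≤ 1`, there is `c > 0` (depending only on `r, α`)
such that for all `0 < λ ≤ 1`,
`∑_{k≥1} (1 + k^(2r))^α (1 + λ k^(2r))⁻² ≤ c λ^(-(α + 1/(2r)))`. -/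
theorem weighted_sum_inv_sq_bound (r : ℕ) (hr : 1 ≤ r) (α : ℝ) (hα0 : 0 ≤ α) (hα1 : α ≤ 1) :
    ∃ c : ℝ, 0 < c ∧ ∀ lam : ℝ, 0 < lam → lam ≤ 1 →
      ∑' k : ℕ, (1 + ((k : ℝ) + 1) ^ (2 * r)) ^ α *
          ((1 + lam * ((k : ℝ) + 1) ^ (2 * r)) ^ 2)⁻¹ ≤
        c * lam ^ (-(α + 1 / (2 * r))) := by
  refine ⟨π, pi_pos, fun lam hlam0 hlam1 => Real.tsum_le_of_sum_range_le (fun k => by positivity)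
    fun n => ?_⟩
  calc ∑ k ∈ range n, (1 + ((k : ℝ) + 1) ^ (2 * r)) ^ α *
          ((1 + lam * ((k : ℝ) + 1) ^ (2 * r)) ^ 2)⁻¹
      ≤ lam ^ (-α) * ∑ k ∈ range n, (1 + lam * ((k : ℝ) + 1) ^ (2 * r))⁻¹ := by
        rw [mul_sum]
        exact sum_le_sum fun k _ => rpow_one_add_mul_inv_sq_le hα0 hα1 hlam0 hlam1 (by positivity)
    _ ≤ lam ^ (-α) * (π * lam ^ (-(1 / ((2 * r : ℕ) : ℝ)))) := by
        gcongr
        exact sum_range_inv_one_add_mul_pow_le (by omega) hlam0 n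
    _ = π * lam ^ (-(α + 1 / (2 * r))) := by
        rw [neg_add, rpow_add hlam0]
        push_cast
        ring
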